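/- Consider a strongly overparametrized deep ReLU network (M₀ ≥ M₁ ≥ ⋯ ≥ M_L ≥ Q, n ≤ M₀, X₀ of full column rank) trained to the explicit zero-loss minimizer θ*. Then for any test set {(x̃_j, ỹ_j)}_{j=1}^m, the test error satisfies (1/m)Σ_j |f_{θ*}(x̃_j) − ỹ_j|² ≤ (1/m)Σ_j min_{i} (|W*_1(x̃_j − x_i)| + |ỹ_j − y_i|)², a bound independent of L and of the hidden layer widths. -/

import Mathlib

/-- The truncated identity matrix `[I 0]` (or `[I; 0]`): entry 1 iff row and column
indices agree. -/
def trunc (p q : ℕ) : Matrix (Fin p) (Fin q) ℝ :=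
  Matrix.of fun i j => if (i : ℕ) = (j : ℕ) then 1 else 0

/-- Entrywise ReLU on a Euclidean vector. -/
noncomputable def relu {k : ℕ} (v : EuclideanSpace ℝ (Fin k)) : EuclideanSpace ℝ (Fin k) :=
  WithLp.toLp 2 (fun i => max (v i) 0)

/-- `α = max_{i,j} |min(Y_{ij}, 0)|`, the modulus of the most negative entry of `Y`. -/
noncomputable def alphaOf {Q n : ℕ} (hQ : 0 < Q) (hn : 0 < n)
    (Y : Matrix (Fin Q) (Fin n) ℝ) : ℝ :=
  Finset.univ.sup' ⟨(⟨0, hQ⟩, ⟨0, hn⟩), Finset.mem_univ _⟩ fun p => |min (Y p.1 p.2) 0|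

/-- First-layer weight `W*_1 = [(Y − B*_{L+1}) X₀⁺ ; 0] ∈ ℝ^{M₁×M₀}`:
the matrix `(Y − B)(X₀ᵀX₀)⁻¹X₀ᵀ` stacked on top of zeros. -/
noncomputable def W1 {Q n M₀ : ℕ} (M₁ : ℕ) (hQ : 0 < Q) (hn : 0 < n)
    (X₀ : Matrix (Fin M₀) (Fin n) ℝ) (Y : Matrix (Fin Q) (Fin n) ℝ) :
    Matrix (Fin M₁) (Fin M₀) ℝ :=
  Matrix.of fun i j =>
    if h : (i : ℕ) < Q then
      ((Matrix.of fun a b => Y a b + alphaOf hQ hn Y) *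
        ((X₀.transpose * X₀)⁻¹ * X₀.transpose)) ⟨i, h⟩ j
    else 0

/-- The hidden layers `2,…,L` of the constructed network, acting on the first hidden
layer: `netHid M k z` is `x^{(k+1)}` given `x^{(1)} = z`, with truncated-identity
weights and zero biases. -/
noncomputable def netHid (M : ℕ → ℕ) :
    ∀ k : ℕ, EuclideanSpace ℝ (Fin (M 1)) → EuclideanSpace ℝ (Fin (M (k + 1)))
  | 0 => fun z => z
  | (k + 1) => fun z =>
      relu (Matrix.toEuclideanLin (trunc (M (k + 2)) (M (k + 1))) (netHid M k z))

/-- The constructed zero-loss network with `L = L' + 1` hidden layers: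
`f(x) = W*_{L+1} x^{(L)} + b*_{L+1}` with `x^{(1)} = ReLU(W*_1 x)`. -/
noncomputable def netF {Q n : ℕ} (L' : ℕ) (M : ℕ → ℕ) (hQ : 0 < Q) (hn : 0 < n)
    (X₀ : Matrix (Fin (M 0)) (Fin n) ℝ) (Y : Matrix (Fin Q) (Fin n) ℝ)
    (x : EuclideanSpace ℝ (Fin (M 0))) : EuclideanSpace ℝ (Fin Q) :=
  Matrix.toEuclideanLin (trunc Q (M (L' + 1)))
      (netHid M L' (relu (Matrix.toEuclideanLin (W1 (M 1) hQ hn X₀ Y) x)))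
    + (WithLp.equiv 2 (Fin Q → ℝ)).symm fun _ => -(alphaOf hQ hn Y)


/-! auxiliary lemmas -/

lemma M_chain (M : ℕ → ℕ) (L' : ℕ) (hmono : ∀ ℓ ≤ L', M (ℓ + 1) ≤ M ℓ) :
    ∀ k ≤ L', M (k + 1) ≤ M 1 := by
  intro k
  induction k with
  | zero => intro _; exact le_rfl
  | succ k ih =>
      intro hk
      exact le_trans (hmono (k + 1) hk) (ih (Nat.le_of_succ_le hk))

lemma netHid_apply (M : ℕ → ℕ) (L' : ℕ) (hmono : ∀ ℓ ≤ L', M (ℓ + 1) ≤ M ℓ)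
    (z : EuclideanSpace ℝ (Fin (M 1))) (hz : ∀ i, 0 ≤ z i) :
    ∀ k, ∀ hk : k ≤ L', ∀ i : Fin (M (k + 1)),
      netHid M k z i = z ⟨i, lt_of_lt_of_le i.2 (M_chain M L' hmono k hk)⟩ := by
  intro k
  induction k with
  | zero =>
      intro _ i
      exact (congrArg z (Fin.eta i _)).symm
  | succ k ih =>
      intro hk i
      have hk' : k ≤ L' := Nat.le_of_succ_le hk
      have hi1 : (i : ℕ) < M (k + 1) := lt_of_lt_of_le i.2 (hmono (k + 1) hk)
      show max ((Matrix.toEuclideanLin (trunc (M (k + 2)) (M (k + 1))) (netHid M k z)) i) 0 = _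
      have hmv : (Matrix.toEuclideanLin (trunc (M (k + 2)) (M (k + 1))) (netHid M k z)) i
          = netHid M k z ⟨i, hi1⟩ := by
        show (∑ j, trunc (M (k + 2)) (M (k + 1)) i j * netHid M k z j) = _
        rw [Finset.sum_eq_single (⟨(i : ℕ), hi1⟩ : Fin (M (k + 1)))]
        · simp [trunc]
        · intro b _ hb
          have : (i : ℕ) ≠ (b : ℕ) := fun h => hb (Fin.ext h.symm)
          simp [trunc, this]
        · intro h; exact absurd (Finset.mem_univ _) h
      rw [hmv, ih hk']
      exact max_eq_left (hz _)

lemma netF_apply {Q n : ℕ} (L' : ℕ) (M : ℕ → ℕ) (hQ : 0 < Q) (hn : 0 < n)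
    (hmono : ∀ ℓ ≤ L', M (ℓ + 1) ≤ M ℓ) (hQM : Q ≤ M (L' + 1))
    (X₀ : Matrix (Fin (M 0)) (Fin n) ℝ) (Y : Matrix (Fin Q) (Fin n) ℝ)
    (x : EuclideanSpace ℝ (Fin (M 0))) (q : Fin Q) :
    netF L' M hQ hn X₀ Y x q
      = max ((Matrix.toEuclideanLin (W1 (M 1) hQ hn X₀ Y) x)
          ⟨q, lt_of_lt_of_le (lt_of_lt_of_le q.2 hQM) (M_chain M L' hmono L' le_rfl)⟩) 0
        - alphaOf hQ hn Y := by
  set z := relu (Matrix.toEuclideanLin (W1 (M 1) hQ hn X₀ Y) x) with hz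
  have hznn : ∀ i, 0 ≤ z i := fun i => le_max_right _ _
  have hqL : (q : ℕ) < M (L' + 1) := lt_of_lt_of_le q.2 hQM
  have h1 : netF L' M hQ hn X₀ Y x q
      = (Matrix.toEuclideanLin (trunc Q (M (L' + 1))) (netHid M L' z)) q
        + -(alphaOf hQ hn Y) := rfl
  have h2 : (Matrix.toEuclideanLin (trunc Q (M (L' + 1))) (netHid M L' z)) q
      = netHid M L' z ⟨q, hqL⟩ := by
    show (∑ j, trunc Q (M (L' + 1)) q j * netHid M L' z j) = _
    rw [Finset.sum_eq_single (⟨(q : ℕ), hqL⟩ : Fin (M (L' + 1)))]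
    · simp [trunc]
    · intro b _ hb
      have : (q : ℕ) ≠ (b : ℕ) := fun h => hb (Fin.ext h.symm)
      simp [trunc, this]
    · intro h; exact absurd (Finset.mem_univ _) h
  rw [h1, h2, netHid_apply M L' hmono z hznn L' le_rfl]
  rw [sub_eq_add_neg]
  rfl

lemma isUnit_of_rank_eq {k : ℕ} (A : Matrix (Fin k) (Fin k) ℝ) (h : A.rank = k) :
    IsUnit A := by
  rw [← Matrix.mulVec_injective_iff_isUnit]
  have hr : LinearMap.range A.mulVecLin = ⊤ := by
    apply Submodule.eq_top_of_finrank_eq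
    rw [show Module.finrank ℝ ↥(LinearMap.range A.mulVecLin) = A.rank from rfl, h]
    simp
  have hsurj : Function.Surjective A.mulVecLin := LinearMap.range_eq_top.mp hr
  have := (LinearMap.injective_iff_surjective (f := A.mulVecLin)).mpr hsurj
  simpa [← Matrix.coe_mulVecLin] using this

lemma alpha_ge {Q n : ℕ} (hQ : 0 < Q) (hn : 0 < n) (Y : Matrix (Fin Q) (Fin n) ℝ)
    (q : Fin Q) (i : Fin n) : -(Y q i) ≤ alphaOf hQ hn Y := by
  have h1 : -(Y q i) ≤ |min (Y q i) 0| :=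
    le_trans (neg_le_neg (min_le_left _ _)) (neg_le_abs _)
  exact le_trans h1 (Finset.le_sup' (fun p : Fin Q × Fin n => |min (Y p.1 p.2) 0|)
    (Finset.mem_univ (q, i)))

lemma W1_mulVec_train {Q n M₀ : ℕ} (M₁ : ℕ) (hQ : 0 < Q) (hn : 0 < n)
    (X₀ : Matrix (Fin M₀) (Fin n) ℝ) (hrank : X₀.rank = n)
    (Y : Matrix (Fin Q) (Fin n) ℝ) (i : Fin n) (r : Fin M₁) (h : (r : ℕ) < Q) :
    (Matrix.toEuclideanLin (W1 M₁ hQ hn X₀ Y)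
        ((WithLp.equiv 2 (Fin M₀ → ℝ)).symm fun s => X₀ s i)) r
      = Y ⟨r, h⟩ i + alphaOf hQ hn Y := by
  have hunit : IsUnit (X₀.transpose * X₀) := by
    apply isUnit_of_rank_eq
    rw [Matrix.rank_transpose_mul_self, hrank]
  have hinv : (X₀.transpose * X₀)⁻¹ * (X₀.transpose * X₀) = 1 :=
    Matrix.nonsing_inv_mul _ ((Matrix.isUnit_iff_isUnit_det _).mp hunit)
  have hmul : (Matrix.of fun a b => Y a b + alphaOf hQ hn Y) *
      ((X₀.transpose * X₀)⁻¹ * X₀.transpose) * X₀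
      = Matrix.of fun a b => Y a b + alphaOf hQ hn Y := by
    rw [Matrix.mul_assoc, Matrix.mul_assoc ((X₀.transpose * X₀)⁻¹) X₀.transpose X₀, hinv,
      Matrix.mul_one]
  show (∑ j, W1 M₁ hQ hn X₀ Y r j * X₀ j i) = _
  have hW : ∀ j, W1 M₁ hQ hn X₀ Y r j
      = ((Matrix.of fun a b => Y a b + alphaOf hQ hn Y) *
          ((X₀.transpose * X₀)⁻¹ * X₀.transpose)) ⟨r, h⟩ j := by
    intro j; simp only [W1, Matrix.of_apply, dif_pos h]
  calc (∑ j, W1 M₁ hQ hn X₀ Y r j * X₀ j i)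
      = ∑ j, ((Matrix.of fun a b => Y a b + alphaOf hQ hn Y) *
          ((X₀.transpose * X₀)⁻¹ * X₀.transpose)) ⟨r, h⟩ j * X₀ j i := by
        exact Finset.sum_congr rfl fun j _ => by rw [hW j]
    _ = ((Matrix.of fun a b => Y a b + alphaOf hQ hn Y) *
          ((X₀.transpose * X₀)⁻¹ * X₀.transpose) * X₀) ⟨r, h⟩ i := by
        rw [Matrix.mul_apply]
    _ = Y ⟨r, h⟩ i + alphaOf hQ hn Y := by rw [hmul]; rfl

lemma netF_train {Q n : ℕ} (L' : ℕ) (M : ℕ → ℕ) (hQ : 0 < Q) (hn : 0 < n)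
    (hmono : ∀ ℓ ≤ L', M (ℓ + 1) ≤ M ℓ) (hQM : Q ≤ M (L' + 1))
    (X₀ : Matrix (Fin (M 0)) (Fin n) ℝ) (hrank : X₀.rank = n)
    (Y : Matrix (Fin Q) (Fin n) ℝ) (i : Fin n) :
    netF L' M hQ hn X₀ Y ((WithLp.equiv 2 (Fin (M 0) → ℝ)).symm fun s => X₀ s i)
      = (WithLp.equiv 2 (Fin Q → ℝ)).symm fun q => Y q i := by
  apply PiLp.ext
  intro q
  rw [netF_apply L' M hQ hn hmono hQM X₀ Y _ q,
    W1_mulVec_train (M 1) hQ hn X₀ hrank Y i _ q.2]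
  have hpos : 0 ≤ Y ⟨(q : ℕ), q.2⟩ i + alphaOf hQ hn Y := by
    have := alpha_ge hQ hn Y ⟨(q : ℕ), q.2⟩ i
    linarith
  rw [max_eq_left hpos]
  show Y ⟨(q : ℕ), q.2⟩ i + alphaOf hQ hn Y - alphaOf hQ hn Y = Y q i
  rw [add_sub_cancel_right]

lemma netF_lip {Q n : ℕ} (L' : ℕ) (M : ℕ → ℕ) (hQ : 0 < Q) (hn : 0 < n)
    (hmono : ∀ ℓ ≤ L', M (ℓ + 1) ≤ M ℓ) (hQM : Q ≤ M (L' + 1))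
    (X₀ : Matrix (Fin (M 0)) (Fin n) ℝ) (Y : Matrix (Fin Q) (Fin n) ℝ)
    (x x' : EuclideanSpace ℝ (Fin (M 0))) :
    ‖netF L' M hQ hn X₀ Y x - netF L' M hQ hn X₀ Y x'‖
      ≤ ‖Matrix.toEuclideanLin (W1 (M 1) hQ hn X₀ Y) (x - x')‖ := by
  have hQ1 : Q ≤ M 1 := le_trans hQM (M_chain M L' hmono L' le_rfl)
  set T := Matrix.toEuclideanLin (W1 (M 1) hQ hn X₀ Y) with hT
  set emb : Fin Q → Fin (M 1) := fun q => ⟨q, lt_of_lt_of_le q.2 hQ1⟩ with hemb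
  have hembinj : Function.Injective emb := by
    intro a b hab
    have h2 : ((emb a : Fin (M 1)) : ℕ) = ((emb b : Fin (M 1)) : ℕ) := by rw [hab]
    exact Fin.ext h2
  rw [EuclideanSpace.norm_eq, EuclideanSpace.norm_eq]
  apply Real.sqrt_le_sqrt
  have step1 : ∀ q : Fin Q,
      ‖(netF L' M hQ hn X₀ Y x - netF L' M hQ hn X₀ Y x') q‖ ^ 2 ≤ ‖T (x - x') (emb q)‖ ^ 2 := by
    intro q
    have hx : (netF L' M hQ hn X₀ Y x - netF L' M hQ hn X₀ Y x') q
        = max (T x (emb q)) 0 - max (T x' (emb q)) 0 := by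
      show netF L' M hQ hn X₀ Y x q - netF L' M hQ hn X₀ Y x' q = _
      rw [netF_apply L' M hQ hn hmono hQM X₀ Y x q, netF_apply L' M hQ hn hmono hQM X₀ Y x' q]
      ring
    have hw : T (x - x') (emb q) = T x (emb q) - T x' (emb q) := by
      rw [map_sub]; rfl
    rw [hx, hw]
    simp only [Real.norm_eq_abs]
    have := abs_max_sub_max_le_abs (T x (emb q)) (T x' (emb q)) 0
    exact pow_le_pow_left₀ (abs_nonneg _) this 2
  calc (∑ q : Fin Q, ‖(netF L' M hQ hn X₀ Y x - netF L' M hQ hn X₀ Y x') q‖ ^ 2)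
      ≤ ∑ q : Fin Q, ‖T (x - x') (emb q)‖ ^ 2 := Finset.sum_le_sum fun q _ => step1 q
    _ = ∑ r ∈ Finset.univ.image emb, ‖T (x - x') r‖ ^ 2 := by
        rw [Finset.sum_image (fun a _ b _ hab => hembinj hab)]
    _ ≤ ∑ r : Fin (M 1), ‖T (x - x') r‖ ^ 2 := by
        apply Finset.sum_le_sum_of_subset_of_nonneg (Finset.subset_univ _)
        intro r _ _; positivity



/-- Architecture-independent generalization bound for the explicitly constructed
zero-loss minimizer of the strongly overparametrized deep ReLU network: the test
error is bounded by the squared unidirectional Chamfer pseudodistance of the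
`W*_1`-transformed test set to the transformed training set. -/
theorem relu_network_generalization_bound {Q n m : ℕ} (L' : ℕ) (M : ℕ → ℕ)
    (hQ : 0 < Q) (hn : 0 < n) (hm : 0 < m)
    (hmono : ∀ ℓ ≤ L', M (ℓ + 1) ≤ M ℓ) (hQM : Q ≤ M (L' + 1)) (hnM : n ≤ M 0)
    (X₀ : Matrix (Fin (M 0)) (Fin n) ℝ) (hrank : X₀.rank = n)
    (Y : Matrix (Fin Q) (Fin n) ℝ)
    (x' : Fin m → EuclideanSpace ℝ (Fin (M 0)))
    (y' : Fin m → EuclideanSpace ℝ (Fin Q)) :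
    ((1 : ℝ) / m) * ∑ j : Fin m, ‖netF L' M hQ hn X₀ Y (x' j) - y' j‖ ^ 2
      ≤ ((1 : ℝ) / m) * ∑ j : Fin m,
          Finset.univ.inf' ⟨⟨0, hn⟩, Finset.mem_univ _⟩ (fun i : Fin n =>
            (‖Matrix.toEuclideanLin (W1 (M 1) hQ hn X₀ Y)
                (x' j - (WithLp.equiv 2 (Fin (M 0) → ℝ)).symm fun r => X₀ r i)‖
              + ‖y' j - (WithLp.equiv 2 (Fin Q → ℝ)).symm fun q => Y q i‖) ^ 2) := by
  apply mul_le_mul_of_nonneg_left _ (by positivity)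
  apply Finset.sum_le_sum
  intro j _
  apply Finset.le_inf'
  intro i _
  set xi : EuclideanSpace ℝ (Fin (M 0)) := (WithLp.equiv 2 (Fin (M 0) → ℝ)).symm fun r => X₀ r i
  set yi : EuclideanSpace ℝ (Fin Q) := (WithLp.equiv 2 (Fin Q → ℝ)).symm fun q => Y q i
  have key : ‖netF L' M hQ hn X₀ Y (x' j) - y' j‖
      ≤ ‖Matrix.toEuclideanLin (W1 (M 1) hQ hn X₀ Y) (x' j - xi)‖ + ‖y' j - yi‖ := by
    calc ‖netF L' M hQ hn X₀ Y (x' j) - y' j‖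
        = ‖(netF L' M hQ hn X₀ Y (x' j) - netF L' M hQ hn X₀ Y xi)
            + (netF L' M hQ hn X₀ Y xi - y' j)‖ := by rw [sub_add_sub_cancel]
      _ ≤ ‖netF L' M hQ hn X₀ Y (x' j) - netF L' M hQ hn X₀ Y xi‖
            + ‖netF L' M hQ hn X₀ Y xi - y' j‖ := norm_add_le _ _
      _ ≤ ‖Matrix.toEuclideanLin (W1 (M 1) hQ hn X₀ Y) (x' j - xi)‖ + ‖y' j - yi‖ := by
          gcongr
          · exact netF_lip L' M hQ hn hmono hQM X₀ Y (x' j) xi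
          · rw [netF_train L' M hQ hn hmono hQM X₀ hrank Y i, norm_sub_rev]
  exact pow_le_pow_left₀ (norm_nonneg _) key 2
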